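/- For a diagonal Gaussian Q = N(μ, diag(σ²)) and standard Gaussian prior P = N(0, I), the vector of standard deviations σ satisfies ‖σ − 1‖₂² ≤ 2 KL(Q, P). -/

import Mathlib

/-- The KL divergence between a diagonal Gaussian `Q = N(μ, diag(σ²))` and the standard
Gaussian `P = N(0, I)` on `ℝ^I`: `KL(Q,P) = (1/2)(‖μ‖₂² + Σᵢ (σᵢ² - 1 - log σᵢ²))`. -/
noncomputable def klGauss {I : ℕ} (μ σ : Fin I → ℝ) : ℝ :=
  (1 / 2) * (∑ i, (μ i) ^ 2 + ∑ i, ((σ i) ^ 2 - 1 - Real.log ((σ i) ^ 2)))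

/-- With `a = s²` this is `r(a) ≥ (√a - 1)²`: since `log s ≤ s - 1`, the right side is at least
`s² - 2s + 1`. -/
theorem sub_one_sq_le_sq_sub_one_sub_log_sq {s : ℝ} (hs : 0 < s) :
    (s - 1) ^ 2 ≤ s ^ 2 - 1 - Real.log (s ^ 2) := by
  have hlog : Real.log s ≤ s - 1 := Real.log_le_sub_one_of_pos hs
  rw [Real.log_pow]
  push_cast
  nlinarith

theorem two_mul_klGauss {I : ℕ} (μ σ : Fin I → ℝ) :
    2 * klGauss μ σ = ∑ i, μ i ^ 2 + ∑ i, (σ i ^ 2 - 1 - Real.log (σ i ^ 2)) := by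
  rw [klGauss]
  ring

/-- For a diagonal Gaussian `Q = N(μ, diag(σ²))` and standard Gaussian prior `P = N(0, I)`,
the vector of standard deviations `σ` satisfies `‖σ - 1‖₂² ≤ 2 KL(Q, P)`. -/
theorem stmt_2 {I : ℕ} (μ σ : Fin I → ℝ) (hσ : ∀ i, 0 < σ i) :
    ∑ i, (σ i - 1) ^ 2 ≤ 2 * klGauss μ σ := by
  rw [two_mul_klGauss]
  calc ∑ i, (σ i - 1) ^ 2
      ≤ ∑ i, (σ i ^ 2 - 1 - Real.log (σ i ^ 2)) :=
        Finset.sum_le_sum fun i _ => sub_one_sq_le_sq_sub_one_sub_log_sq (hσ i)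
    _ ≤ ∑ i, μ i ^ 2 + ∑ i, (σ i ^ 2 - 1 - Real.log (σ i ^ 2)) :=
        le_add_of_nonneg_left (Finset.sum_nonneg fun i _ => sq_nonneg (μ i))
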